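/- arXiv:2001.00305 — 7 statements merged into one kernel-verified Lean document; each statement's English description precedes it below -/
import Mathlib

section
/- The group algebra 𝔽₂D₈ of the dihedral group D₈ of order 8 over the field with two elements is a reflexive ring: for all a, b ∈ 𝔽₂D₈, if a*x*b = 0 for all x ∈ 𝔽₂D₈, then b*x*a = 0 for all x ∈ 𝔽₂D₈. -/
/-!
The coefficient of `1` is a trace on any group algebra: `(u * v).coeff 1 = (v * u).coeff 1`.
Every coefficient of `b * x * a` is such a trace, `(b * x * a * single g⁻¹ 1).coeff 1`, and
cycling `b` to the back turns it into `(x * (a * single g⁻¹ 1 * b)).coeff 1`, which vanishes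
because `a * y * b = 0` for `y = single g⁻¹ 1`.
-/

namespace MonoidAlgebra

variable {k G : Type*} [CommSemiring k] [Group G]

theorem coeff_one_mul_comm (u v : MonoidAlgebra k G) : (u * v).coeff 1 = (v * u).coeff 1 := by
  induction u using MonoidAlgebra.induction_linear with
  | zero => simp
  | add f g hf hg => simp only [add_mul, mul_add, coeff_add, Finsupp.add_apply, hf, hg]
  | single x r => rw [coeff_single_mul_apply, coeff_mul_single_apply, one_mul, mul_one, mul_comm]

theorem coeff_eq_coeff_one_mul_single_inv (u : MonoidAlgebra k G) (g : G) :
    u.coeff g = (u * single g⁻¹ 1).coeff 1 := by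
  rw [coeff_mul_single_apply, one_mul, inv_inv, mul_one]

theorem mul_mul_eq_zero_swap {a b : MonoidAlgebra k G} (h : ∀ x, a * x * b = 0)
    (x : MonoidAlgebra k G) : b * x * a = 0 := by
  ext g
  calc (b * x * a).coeff g = (b * (x * (a * single g⁻¹ 1))).coeff 1 := by
        rw [coeff_eq_coeff_one_mul_single_inv, mul_assoc, mul_assoc]
    _ = (x * (a * single g⁻¹ 1 * b)).coeff 1 := by rw [coeff_one_mul_comm, mul_assoc]
    _ = 0 := by rw [h, mul_zero, coeff_zero, Finsupp.zero_apply]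

end MonoidAlgebra

theorem f2d8_reflexive :
    ∀ a b : MonoidAlgebra (ZMod 2) (DihedralGroup 4),
      (∀ x : MonoidAlgebra (ZMod 2) (DihedralGroup 4), a * x * b = 0) →
      (∀ x : MonoidAlgebra (ZMod 2) (DihedralGroup 4), b * x * a = 0) :=
  fun _ _ => MonoidAlgebra.mul_mul_eq_zero_swap
end

section
/- Every finite chain ring is duo (every left ideal and every right ideal is two-sided) and symmetric (for all a, b, c, if a*b*c = 0 then b*a*c = 0). -/
/-!
A finite chain ring `R` is local, and its maximal left ideal is principal, `Rθ`, with `θ`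
nilpotent; peeling off factors `θ` writes every element as `u θ^k` with `u` a unit. Moreover
`θ u = v θ` with `v` a unit, and a counting argument upgrades `θR ⊆ Rθ` to `θR = Rθ`. Hence
`xR = Rx` for every `x`, which makes `R` duo, and `ba` is a unit multiple of `ab`, which makes
`R` symmetric.
-/

/-- A ring is a (left) chain ring if its left ideals are totally ordered by inclusion. -/
def IsChainRing (R : Type*) [Ring R] : Prop :=
  ∀ I J : Ideal R, I ≤ J ∨ J ≤ I

/-- An additive subgroup is a right ideal if it is closed under right multiplication. -/
def IsRightIdeal {R : Type*} [Ring R] (S : AddSubgroup R) : Prop :=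
  ∀ a ∈ S, ∀ r : R, a * r ∈ S

/-- A ring is duo if every left ideal and every right ideal is two-sided. -/
def IsDuoRing (R : Type*) [Ring R] : Prop :=
  (∀ I : Ideal R, ∀ a ∈ I, ∀ r : R, a * r ∈ I) ∧
  (∀ S : AddSubgroup R, IsRightIdeal S → ∀ a ∈ S, ∀ r : R, r * a ∈ S)

/-- A ring is symmetric if `a*b*c = 0` implies `b*a*c = 0`. -/
def IsSymmetricRing (R : Type*) [Ring R] : Prop :=
  ∀ a b c : R, a * b * c = 0 → b * a * c = 0

def IsInvariantElem {M : Type*} [Monoid M] (x : M) : Prop :=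
  (∀ r, ∃ s, x * r = s * x) ∧ ∀ r, ∃ s, r * x = x * s

section Monoid

variable {M : Type*} [Monoid M] {x y : M}

theorem IsUnit.isInvariantElem (hx : IsUnit x) : IsInvariantElem x := by
  obtain ⟨u, rfl⟩ := hx
  exact ⟨fun r => ⟨u * r * ↑u⁻¹, by simp [mul_assoc]⟩,
    fun r => ⟨↑u⁻¹ * r * u, by simp [← mul_assoc]⟩⟩

theorem IsInvariantElem.mul (hx : IsInvariantElem x) (hy : IsInvariantElem y) :
    IsInvariantElem (x * y) := by
  refine ⟨fun r => ?_, fun r => ?_⟩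
  · obtain ⟨s, hs⟩ := hy.1 r
    obtain ⟨t, ht⟩ := hx.1 s
    exact ⟨t, by rw [mul_assoc, hs, ← mul_assoc, ht, mul_assoc]⟩
  · obtain ⟨s, hs⟩ := hx.2 r
    obtain ⟨t, ht⟩ := hy.2 s
    exact ⟨t, by rw [← mul_assoc, hs, mul_assoc, ht, mul_assoc]⟩

theorem IsInvariantElem.pow (hx : IsInvariantElem x) (n : ℕ) : IsInvariantElem (x ^ n) := by
  induction n with
  | zero => simpa using isUnit_one.isInvariantElem
  | succ n ih => simpa [pow_succ] using ih.mul hx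

end Monoid

theorem isDuoRing_of_forall_isInvariantElem {R : Type*} [Ring R]
    (h : ∀ x : R, IsInvariantElem x) : IsDuoRing R := by
  refine ⟨fun I a ha r => ?_, fun S hS a ha r => ?_⟩
  · obtain ⟨s, hs⟩ := (h a).1 r
    exact hs ▸ I.mul_mem_left s ha
  · obtain ⟨s, hs⟩ := (h a).2 r
    exact hs ▸ hS a ha s

theorem isSymmetricRing_of_forall_exists_unit_mul {R : Type*} [Ring R]
    (h : ∀ a b : R, ∃ w : Rˣ, b * a = w * (a * b)) : IsSymmetricRing R := by
  intro a b c habc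
  obtain ⟨w, hw⟩ := h a b
  rw [hw, mul_assoc, habc, mul_zero]

theorem AddMonoidHom.range_eq_of_ker_eq_of_range_le {G H : Type*} [AddGroup G] [Finite G]
    [AddGroup H] {f g : G →+ H} (hker : f.ker = g.ker) (hle : f.range ≤ g.range) :
    f.range = g.range :=
  have : Finite g.range := .of_surjective _ g.rangeRestrict_surjective
  AddSubgroup.eq_of_le_of_card_ge hle <| by
    rw [← AddSubgroup.index_ker, ← AddSubgroup.index_ker, hker]

namespace IsLocalRing

variable {R : Type*} [Ring R] [IsLocalRing R]

theorem isUnit_one_sub_of_not_isUnit {x : R} (hx : ¬IsUnit x) : IsUnit (1 - x) :=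
  (isUnit_or_isUnit_of_add_one (add_sub_cancel x 1)).resolve_left hx

theorem eq_zero_of_eq_mul_of_not_isUnit {s x : R} (hs : ¬IsUnit s) (h : x = s * x) : x = 0 := by
  have : (1 - s) * x = 0 := by rw [sub_mul, one_mul, ← h, sub_self]
  exact (isUnit_one_sub_of_not_isUnit hs).mul_right_eq_zero.1 this

theorem isNilpotent_of_not_isUnit [Finite R] {x : R} (hx : ¬IsUnit x) : IsNilpotent x := by
  obtain ⟨a, b, hne, hab⟩ := Finite.exists_ne_map_eq_of_infinite (x ^ · : ℕ → R)
  wlog hlt : a < b generalizing a b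
  · exact this b a hne.symm hab.symm (by omega)
  obtain ⟨n, rfl⟩ := Nat.exists_eq_add_of_lt hlt
  have hunit : IsUnit (1 - x ^ (n + 1)) :=
    isUnit_one_sub_of_not_isUnit (mt isUnit_pow_succ_iff.1 hx)
  refine ⟨a, hunit.mul_left_eq_zero.1 ?_⟩
  rw [mul_sub, mul_one, ← pow_add, ← add_assoc, ← hab, sub_self]

variable (R) [IsDedekindFiniteMonoid R]

/-- The maximal left ideal of a local ring. -/
def nonunitsIdeal : Ideal R where
  carrier := nonunits R
  add_mem' := nonunits_add
  zero_mem' := zero_mem_nonunits.2 zero_ne_one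
  smul_mem' _ _ hx h := hx (isUnit_of_mul_isUnit_right h)

end IsLocalRing

namespace IsChainRing

variable {R : Type*} [Ring R]

theorem not_isUnit_add [IsDedekindFiniteMonoid R] (hR : IsChainRing R) {x y : R}
    (hx : ¬IsUnit x) (hy : ¬IsUnit y) : ¬IsUnit (x + y) := by
  rcases hR (Ideal.span {x}) (Ideal.span {y}) with h | h
  · obtain ⟨r, rfl⟩ := Ideal.mem_span_singleton'.1 (h (Ideal.mem_span_singleton_self _))
    rw [← add_one_mul]
    exact fun hu => hy (isUnit_of_mul_isUnit_right hu)
  · obtain ⟨r, rfl⟩ := Ideal.mem_span_singleton'.1 (h (Ideal.mem_span_singleton_self _))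
    rw [← one_add_mul]
    exact fun hu => hx (isUnit_of_mul_isUnit_right hu)

theorem isLocalRing [IsDedekindFiniteMonoid R] [Nontrivial R] (hR : IsChainRing R) :
    IsLocalRing R :=
  .of_nonunits_add fun _ _ => hR.not_isUnit_add

theorem exists_eq_span_singleton [Finite R] (hR : IsChainRing R) (I : Ideal R) :
    ∃ θ, I = Ideal.span {θ} := by
  obtain ⟨θ, hθI, hmax⟩ := Set.Finite.exists_maximalFor (fun x : R => Ideal.span {x})
    (I : Set R) (Set.toFinite _) ⟨0, I.zero_mem⟩
  refine ⟨θ, le_antisymm (fun x hx => ?_) ((Ideal.span_singleton_le_iff_mem I).2 hθI)⟩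
  have : Ideal.span {x} ≤ Ideal.span {θ} := (hR _ _).elim id (hmax hx)
  exact this (Ideal.mem_span_singleton_self x)

end IsChainRing

namespace IsLocalRing

section DedekindFinite

variable {R : Type*} [Ring R] [IsLocalRing R] [IsDedekindFiniteMonoid R] {θ : R}

variable (θ) in
def IsUniformizer : Prop :=
  nonunitsIdeal R = Ideal.span {θ}

namespace IsUniformizer

theorem not_isUnit_iff (hθ : IsUniformizer θ) {x : R} : ¬IsUnit x ↔ ∃ r, r * θ = x := by
  rw [← Ideal.mem_span_singleton', ← hθ]
  rfl

theorem not_isUnit (hθ : IsUniformizer θ) : ¬IsUnit θ :=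
  hθ.not_isUnit_iff.2 ⟨1, one_mul θ⟩

theorem exists_mul_eq_mul (hθ : IsUniformizer θ) (r : R) : ∃ s, θ * r = s * θ :=
  (hθ.not_isUnit_iff.1 fun h => hθ.not_isUnit (isUnit_of_mul_isUnit_left h)).imp
    fun _ hs => hs.symm

theorem exists_unit_mul_pow_eq (hθ : IsUniformizer θ) (hnil : IsNilpotent θ) (x : R) :
    ∃ (u : Rˣ) (k : ℕ), ↑u * θ ^ k = x := by
  have key : ∀ n (x : R), (∃ (u : Rˣ) (k : ℕ), ↑u * θ ^ k = x) ∨ ∃ r, r * θ ^ n = x := by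
    intro n
    induction n with
    | zero => exact fun x => .inr ⟨x, by simp⟩
    | succ n ih =>
      intro x
      obtain h | ⟨r, rfl⟩ := ih x
      · exact .inl h
      by_cases hr : IsUnit r
      · exact .inl ⟨hr.unit, n, rfl⟩
      obtain ⟨s, rfl⟩ := hθ.not_isUnit_iff.1 hr
      exact .inr ⟨s, by rw [pow_succ', mul_assoc]⟩
  obtain ⟨n, hn⟩ := hnil
  refine (key n x).elim id fun ⟨r, hr⟩ => ⟨1, n, ?_⟩
  rw [← hr, hn, mul_zero, mul_zero]

theorem exists_mul_unit_eq_unit_mul (hθ : IsUniformizer θ) (u : Rˣ) :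
    ∃ v : Rˣ, θ * u = v * θ := by
  obtain ⟨s, hs⟩ := hθ.exists_mul_eq_mul u
  by_cases hsu : IsUnit s
  · exact ⟨hsu.unit, hs⟩
  -- otherwise `θ = θ u u⁻¹` lies in `s R θ`, which forces `θ = 0`
  obtain ⟨t, ht⟩ := hθ.exists_mul_eq_mul ↑u⁻¹
  have hθ0 : θ = 0 := eq_zero_of_eq_mul_of_not_isUnit (s := s * t)
    (fun h => hsu (isUnit_of_mul_isUnit_left h)) <| by
      calc θ = θ * u * ↑u⁻¹ := by simp [mul_assoc]
      _ = s * t * θ := by rw [hs, mul_assoc, ht, mul_assoc]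
  exact ⟨1, by simp [hθ0]⟩

theorem exists_pow_mul_unit_eq_unit_mul (hθ : IsUniformizer θ) (k : ℕ) (u : Rˣ) :
    ∃ v : Rˣ, θ ^ k * u = v * θ ^ k := by
  induction k generalizing u with
  | zero => exact ⟨u, by simp⟩
  | succ k ih =>
    obtain ⟨v, hv⟩ := hθ.exists_mul_unit_eq_unit_mul u
    obtain ⟨w, hw⟩ := ih v
    exact ⟨w, by rw [pow_succ, mul_assoc, hv, ← mul_assoc, hw, mul_assoc]⟩

theorem exists_unit_mul_comm (hθ : IsUniformizer θ) (hnil : IsNilpotent θ) (a b : R) :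
    ∃ w : Rˣ, b * a = w * (a * b) := by
  obtain ⟨u, i, rfl⟩ := hθ.exists_unit_mul_pow_eq hnil a
  obtain ⟨v, j, rfl⟩ := hθ.exists_unit_mul_pow_eq hnil b
  obtain ⟨u', hu'⟩ := hθ.exists_pow_mul_unit_eq_unit_mul j u
  obtain ⟨v', hv'⟩ := hθ.exists_pow_mul_unit_eq_unit_mul i v
  have hab : ↑u * θ ^ i * (↑v * θ ^ j) = ↑(u * v') * θ ^ (i + j) := by
    rw [mul_assoc, ← mul_assoc (θ ^ i), hv', mul_assoc, ← pow_add, ← mul_assoc, Units.val_mul]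
  have hba : ↑v * θ ^ j * (↑u * θ ^ i) = ↑(v * u') * θ ^ (i + j) := by
    rw [mul_assoc, ← mul_assoc (θ ^ j), hu', mul_assoc, ← pow_add, ← mul_assoc, Units.val_mul,
      add_comm]
  refine ⟨v * u' * (u * v')⁻¹, ?_⟩
  rw [hab, hba, ← mul_assoc, ← Units.val_mul, inv_mul_cancel_right]

theorem mul_eq_zero_comm (hθ : IsUniformizer θ) (hnil : IsNilpotent θ) (x : R) :
    x * θ = 0 ↔ θ * x = 0 := by
  obtain ⟨u, k, rfl⟩ := hθ.exists_unit_mul_pow_eq hnil x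
  obtain ⟨v, hv⟩ := hθ.exists_mul_unit_eq_unit_mul u
  rw [mul_assoc, ← pow_succ, ← mul_assoc, hv, mul_assoc, ← pow_succ', Units.mul_right_eq_zero,
    Units.mul_right_eq_zero]

end IsUniformizer

end DedekindFinite

namespace IsUniformizer

variable {R : Type*} [Ring R] [IsLocalRing R] [Finite R] {θ : R}

theorem isNilpotent (hθ : IsUniformizer θ) : IsNilpotent θ :=
  isNilpotent_of_not_isUnit hθ.not_isUnit

/-- The inclusion `θ R ⊆ R θ` is an equality because both sides have `|R / ann θ|` elements:
the left and right annihilators of `θ` coincide. -/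
theorem isInvariantElem (hθ : IsUniformizer θ) : IsInvariantElem θ := by
  have hle : (AddMonoidHom.mulLeft θ).range ≤ (AddMonoidHom.mulRight θ).range := by
    rintro _ ⟨r, rfl⟩
    obtain ⟨s, hs⟩ := hθ.exists_mul_eq_mul r
    exact ⟨s, hs.symm⟩
  have hker : (AddMonoidHom.mulLeft θ).ker = (AddMonoidHom.mulRight θ).ker := by
    ext x
    exact (hθ.mul_eq_zero_comm hθ.isNilpotent x).symm
  have hrange := AddMonoidHom.range_eq_of_ker_eq_of_range_le hker hle
  refine ⟨hθ.exists_mul_eq_mul, fun r => ?_⟩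
  obtain ⟨s, hs⟩ : r * θ ∈ (AddMonoidHom.mulLeft θ).range := hrange ▸ ⟨r, rfl⟩
  exact ⟨s, hs.symm⟩

theorem forall_isInvariantElem (hθ : IsUniformizer θ) (x : R) : IsInvariantElem x := by
  obtain ⟨u, k, rfl⟩ := hθ.exists_unit_mul_pow_eq hθ.isNilpotent x
  exact u.isUnit.isInvariantElem.mul (hθ.isInvariantElem.pow k)

end IsUniformizer

end IsLocalRing

theorem finite_chain_ring_duo_and_symmetric (R : Type*) [Ring R] [Finite R]
    (hchain : IsChainRing R) : IsDuoRing R ∧ IsSymmetricRing R := by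
  rcases subsingleton_or_nontrivial R with _ | _
  · exact ⟨isDuoRing_of_forall_isInvariantElem fun x => (isUnit_of_subsingleton x).isInvariantElem,
      fun _ _ _ _ => Subsingleton.elim _ _⟩
  have := hchain.isLocalRing
  obtain ⟨θ, hθ : IsLocalRing.IsUniformizer θ⟩ :=
    hchain.exists_eq_span_singleton (IsLocalRing.nonunitsIdeal R)
  exact ⟨isDuoRing_of_forall_isInvariantElem hθ.forall_isInvariantElem,
    isSymmetricRing_of_forall_exists_unit_mul (hθ.exists_unit_mul_comm hθ.isNilpotent)⟩
end

section
/- Let R be a local ring with Jacobson radical J = J(R) such that the residue field R/J is a prime field (isomorphic to ZMod p for some prime p). Then R is semicommutative if and only if for all a, b ∈ J with a*b = 0, one has a*x*b = 0 for all x ∈ J. -/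
/-- A ring is semicommutative if `a*b = 0` implies `aRb = 0`. -/
def IsSemicommutativeRing (R : Type*) [Ring R] : Prop :=
  ∀ a b : R, a * b = 0 → ∀ r : R, a * r * b = 0

/-- A ring has prime residue field if it admits a surjective ring homomorphism onto
`ZMod p` for some prime `p` whose kernel is the Jacobson radical. -/
def HasPrimeResidueField (R : Type*) [Ring R] : Prop :=
  ∃ p : ℕ, p.Prime ∧ ∃ f : R →+* ZMod p,
    Function.Surjective f ∧ RingHom.ker f = Ideal.jacobson (⊥ : Ideal R)

private lemma isUnit_of_left_inv {R : Type*} [Ring R] [IsLocalRing R] {a t : R}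
    (h : t * a = 1) : IsUnit a := by
  have hsum : a * t + (1 - a * t) = 1 := by noncomm_ring
  rcases IsLocalRing.isUnit_or_isUnit_of_add_one hsum with hu | hu
  · -- a*t is a unit and idempotent, hence equals 1
    have hid : (a * t) * (a * t) = a * t := by
      calc (a * t) * (a * t) = a * (t * a) * t := by noncomm_ring
      _ = a * t := by rw [h, mul_one]
    have h1 : a * t = 1 := by
      rcases hu with ⟨u, hu⟩
      have he : (↑u : R) * ↑u = ↑u := by rw [hu]; exact hid
      have h3 : (↑u⁻¹ : R) * (↑u * ↑u) = ↑u⁻¹ * ↑u := by rw [he]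
      rw [← mul_assoc, u.inv_mul, one_mul] at h3
      rw [← hu, h3]
    exact ⟨⟨a, t, h1, h⟩, rfl⟩
  · exfalso
    have hz : (1 - a * t) * a = 0 := by
      have : a * (t * a) = a * 1 := by rw [h]
      calc (1 - a * t) * a = a - a * (t * a) := by noncomm_ring
      _ = 0 := by rw [this, mul_one, sub_self]
    rcases hu with ⟨u, hu⟩
    have ha0 : a = 0 := by
      have : (↑u⁻¹ : R) * ((1 - a*t) * a) = 0 := by rw [hz, mul_zero]
      rwa [← mul_assoc, ← hu, u.inv_mul, one_mul] at this
    rw [ha0, mul_zero] at h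
    exact one_ne_zero h.symm

private lemma nonunit_mem_jacobson {R : Type*} [Ring R] [IsLocalRing R] {a : R}
    (h : ¬ IsUnit a) : a ∈ Ideal.jacobson (⊥ : Ideal R) := by
  rw [Ideal.jacobson, Ideal.mem_sInf]
  rintro M ⟨-, hM⟩
  by_contra ha
  have htop : M ⊔ Ideal.span {a} = ⊤ := by
    refine hM.1.2 _ ?_
    refine lt_of_le_of_ne le_sup_left (fun he => ha ?_)
    rw [he]
    exact (le_sup_right : Ideal.span {a} ≤ M ⊔ Ideal.span {a}) (Ideal.subset_span rfl)
  have h1 : (1 : R) ∈ M ⊔ Ideal.span {a} := htop ▸ Submodule.mem_top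
  rcases Submodule.mem_sup.mp h1 with ⟨m, hm, s, hs, hms⟩
  rcases Ideal.mem_span_singleton'.mp hs with ⟨r, hr⟩
  have hsum : m + r * a = 1 := by rw [hr]; exact hms
  rcases IsLocalRing.isUnit_or_isUnit_of_add_one hsum with hu | hu
  · exact hM.ne_top (Ideal.eq_top_of_isUnit_mem M hm hu)
  · rcases hu with ⟨u, hu⟩
    have : (↑u⁻¹ * r) * a = 1 := by rw [mul_assoc, ← hu, u.inv_mul]
    exact h (isUnit_of_left_inv this)

theorem local_semicommutative_iff_jacobson_condition
    (R : Type*) [Ring R] [IsLocalRing R] (hres : HasPrimeResidueField R) :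
    IsSemicommutativeRing R ↔
      ∀ a ∈ Ideal.jacobson (⊥ : Ideal R), ∀ b ∈ Ideal.jacobson (⊥ : Ideal R),
        a * b = 0 → ∀ x ∈ Ideal.jacobson (⊥ : Ideal R), a * x * b = 0 := by
  constructor
  · intro H a _ b _ hab x _
    exact H a b hab x
  · intro H a b hab r
    rcases hres with ⟨p, hp, f, hsurj, hker⟩
    by_cases hua : IsUnit a
    · rcases hua with ⟨u, hu⟩
      have hb : b = 0 := by
        have : (↑u⁻¹ : R) * (a * b) = 0 := by rw [hab, mul_zero]
        rwa [← mul_assoc, ← hu, u.inv_mul, one_mul] at this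
      rw [hb, mul_zero]
    by_cases hub : IsUnit b
    · rcases hub with ⟨u, hu⟩
      have ha0 : a = 0 := by
        have : (a * b) * ↑u⁻¹ = 0 := by rw [hab, zero_mul]
        rwa [mul_assoc, ← hu, u.mul_inv, mul_one] at this
      rw [ha0, zero_mul, zero_mul]
    have haJ := nonunit_mem_jacobson hua
    have hbJ := nonunit_mem_jacobson hub
    -- find n : ℕ with r - n ∈ J
    haveI : NeZero p := ⟨hp.ne_zero⟩
    set n : ℕ := (f r).val with hn
    have hfr : f ((n : R)) = f r := by
      rw [map_natCast, hn, ZMod.natCast_val, ZMod.cast_id]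
    have hdiff : r - (n : R) ∈ Ideal.jacobson (⊥ : Ideal R) := by
      rw [← hker, RingHom.mem_ker, map_sub, hfr, sub_self]
    have h1 : a * (r - (n : R)) * b = 0 := H a haJ b hbJ hab _ hdiff
    have h2 : a * (n : R) * b = 0 := by
      rw [← (Nat.cast_commute n a).eq, mul_assoc, hab, mul_zero]
    calc a * r * b = a * (r - (n : R)) * b + a * (n : R) * b := by noncomm_ring
    _ = 0 := by rw [h1, h2, add_zero]
end

section
/- Let R be a local reflexive ring with Jacobson radical J = J(R) such that J⁴ = 0 and the residue field R/J is a prime field (isomorphic to ZMod p for some prime p). Then for all a, b, c ∈ J: a*b*c = 0 if and only if b*c*a = 0, if and only if c*a*b = 0. -/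
open Pointwise

/-- A ring is reflexive if `aRb = 0` implies `bRa = 0`. -/
def IsReflexiveRing (R : Type*) [Ring R] : Prop :=
  ∀ a b : R, (∀ r : R, a * r * b = 0) → (∀ r : R, b * r * a = 0)

/-- The `i`-th power of the Jacobson radical, as an additive subgroup: the additive
closure of the set of products of `i` elements of the Jacobson radical. -/
def jacobsonPow (R : Type*) [Ring R] (i : ℕ) : AddSubgroup R :=
  AddSubgroup.closure (((Ideal.jacobson (⊥ : Ideal R) : Ideal R) : Set R) ^ i)

theorem local_reflexive_cyclic_triple_products
    (R : Type*) [Ring R] [IsLocalRing R] (href : IsReflexiveRing R)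
    (hJ4 : jacobsonPow R 4 = ⊥) (hres : HasPrimeResidueField R)
    (a b c : R) (ha : a ∈ Ideal.jacobson (⊥ : Ideal R))
    (hb : b ∈ Ideal.jacobson (⊥ : Ideal R))
    (hc : c ∈ Ideal.jacobson (⊥ : Ideal R)) :
    (a * b * c = 0 ↔ b * c * a = 0) ∧ (b * c * a = 0 ↔ c * a * b = 0) := by
  set J := Ideal.jacobson (⊥ : Ideal R) with hJdef
  -- products of four elements of J vanish
  have hzero : ∀ x1 x2 x3 x4 : R, x1 ∈ J → x2 ∈ J → x3 ∈ J → x4 ∈ J →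
      x1 * x2 * x3 * x4 = 0 := by
    intro x1 x2 x3 x4 h1 h2 h3 h4
    have hmem : x1 * x2 * x3 * x4 ∈ ((J : Set R)) ^ 4 := by
      rw [show (4:ℕ) = 3 + 1 from rfl, pow_succ, show (3:ℕ) = 2 + 1 from rfl,
        pow_succ, show (2:ℕ) = 1 + 1 from rfl, pow_succ, pow_one]
      exact Set.mul_mem_mul (Set.mul_mem_mul (Set.mul_mem_mul h1 h2) h3) h4
    have : x1 * x2 * x3 * x4 ∈ jacobsonPow R 4 := AddSubgroup.subset_closure hmem
    rw [hJ4] at this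
    exact AddSubgroup.mem_bot.mp this
  -- decomposition of any r as natural number plus element of J
  obtain ⟨p, hp, f, hsurj, hker⟩ := hres
  haveI : Fact p.Prime := ⟨hp⟩
  have hdec : ∀ r : R, ∃ (n : ℕ) (j : R), j ∈ J ∧ r = (n : R) + j := by
    intro r
    refine ⟨(f r).val, r - ((f r).val : R), ?_, by abel⟩
    have hmem : r - ((f r).val : R) ∈ RingHom.ker f := by
      rw [RingHom.mem_ker, map_sub, map_natCast, ZMod.natCast_val,
        ZMod.cast_id, sub_self]
    rw [hker] at hmem
    exact hmem
  -- key cyclic step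
  have key : ∀ x y z : R, x ∈ J → y ∈ J → z ∈ J → x * y * z = 0 → z * x * y = 0 := by
    intro x y z hx hy hz h
    have h1 : ∀ r : R, (x * y) * r * z = 0 := by
      intro r
      obtain ⟨n, j, hj, rfl⟩ := hdec r
      have hc : ((n : R)) * (x * y) = (x * y) * (n : R) := (Nat.cast_commute n _).eq
      calc (x * y) * ((n : R) + j) * z
          = (n : R) * (x * y * z) + x * y * j * z := by
            rw [mul_add, add_mul, ← hc, mul_assoc]
        _ = 0 := by rw [h, mul_zero, zero_add]; exact hzero x y j z hx hy hj hz
    have h2 := href (x * y) z h1 1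
    simpa [mul_assoc] using h2
  have f1 : a * b * c = 0 → c * a * b = 0 := key a b c ha hb hc
  have f2 : c * a * b = 0 → b * c * a = 0 := key c a b hc ha hb
  have f3 : b * c * a = 0 → a * b * c = 0 := key b c a hb hc ha
  exact ⟨⟨fun h => f2 (f1 h), f3⟩, ⟨fun h => f1 (f3 h), f2⟩⟩
end

section
/- Let R be a finite local ring with Jacobson radical J = J(R) such that the residue field R/J is a prime field (isomorphic to ZMod p for some prime p) and J³ = 0. Then R is semicommutative. -/
open Pointwise

private lemma finite_isUnit_of_mul_eq_one {M : Type*} [Monoid M] [Finite M] {m z : M}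
    (h : m * z = 1) : IsUnit m := by
  have hinj : Function.Injective (fun x : M => x * m) := fun x y hxy => by
    simpa [mul_assoc, h] using congrArg (· * z) hxy
  obtain ⟨w, hw'⟩ := Finite.injective_iff_surjective.mp hinj 1
  have hw := hw'
  simp only [] at hw
  have hwz : z = w := by
    calc z = (w * m) * z := by rw [hw, one_mul]
    _ = w * (m * z) := by rw [mul_assoc]
    _ = w := by rw [h, mul_one]
  exact ⟨⟨m, z, h, hwz ▸ hw⟩, rfl⟩

private lemma finite_isUnit_of_mul_eq_one' {M : Type*} [Monoid M] [Finite M] {m z : M}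
    (h : z * m = 1) : IsUnit m := by
  have hinj : Function.Injective (fun x : M => m * x) := fun x y hxy => by
    simpa [← mul_assoc, h] using congrArg (z * ·) hxy
  obtain ⟨w, hw'⟩ := Finite.injective_iff_surjective.mp hinj 1
  have hw := hw'
  simp only [] at hw
  have hwz : z = w := by
    calc z = z * (m * w) := by rw [hw, mul_one]
    _ = (z * m) * w := by rw [mul_assoc]
    _ = w := by rw [h, one_mul]
  exact ⟨⟨m, z, hwz ▸ hw, h⟩, rfl⟩

theorem finite_local_j3_zero_semicommutative
    (R : Type*) [Ring R] [Finite R] [IsLocalRing R]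
    (hres : HasPrimeResidueField R) (hJ3 : jacobsonPow R 3 = ⊥) :
    IsSemicommutativeRing R := by
  rw [jacobsonPow] at hJ3
  intro a0 b0 hab0 r0
  revert a0 b0 hab0 r0
  obtain ⟨p, hp, f, hf, hker⟩ := hres
  haveI := Fact.mk hp
  set J := Ideal.jacobson (⊥ : Ideal R) with hJdef
  -- nonunits lie in J
  have hnon : ∀ x : R, ¬ IsUnit x → x ∈ J := by
    intro x hx
    by_contra hxJ
    apply hx
    have hfx : f x ≠ 0 := by
      intro h0
      exact hxJ (hker ▸ RingHom.mem_ker.mpr h0)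
    obtain ⟨c, hc⟩ := hf (f x)⁻¹
    have h1 : (1 : R) - x * c ∈ J := by
      rw [← hker, RingHom.mem_ker]
      simp [hc, mul_inv_cancel₀ hfx]
    obtain ⟨z, hz⟩ := Ideal.mem_jacobson_iff.mp h1 (-1)
    rw [Ideal.mem_bot] at hz
    have he : z * -1 * (1 - x * c) + z - 1 = z * (x * c) - 1 := by noncomm_ring
    rw [he] at hz
    have hz' : z * (x * c) = 1 := sub_eq_zero.mp hz
    have hu : IsUnit (x * c) := finite_isUnit_of_mul_eq_one' hz'
    obtain ⟨u, hu⟩ := hu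
    have : x * (c * ↑u⁻¹) = 1 := by
      rw [← mul_assoc, ← hu, Units.mul_inv]
    exact finite_isUnit_of_mul_eq_one this
  intro a b hab r
  by_cases hua : IsUnit a
  · obtain ⟨u, rfl⟩ := hua
    have hb : b = 0 := by
      have := congrArg (fun t => (↑u⁻¹ : R) * t) hab
      simpa [← mul_assoc] using this
    simp [hb]
  by_cases hub : IsUnit b
  · obtain ⟨u, rfl⟩ := hub
    have ha : a = 0 := by
      have := congrArg (fun t => t * (↑u⁻¹ : R)) hab
      simpa [mul_assoc] using this
    simp [ha]
  have haJ : a ∈ J := hnon a hua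
  have hbJ : b ∈ J := hnon b hub
  -- decompose r
  set n : ℕ := (f r).val with hn
  set j : R := r - (n : R) with hj
  have hjJ : j ∈ J := by
    rw [← hker, RingHom.mem_ker]
    rw [hj, map_sub, map_natCast, sub_eq_zero, hn]
    simp [ZMod.natCast_val, ZMod.cast_id]
  have hjzero : a * j * b = 0 := by
    have h3 : a * j * b ∈ AddSubgroup.closure ((J : Set R) ^ 3) := by
      apply AddSubgroup.subset_closure
      have : ((J : Set R)) ^ 3 = (J : Set R) * (J : Set R) * (J : Set R) := by
        rw [pow_succ, pow_succ, pow_one]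
      rw [this]
      exact Set.mul_mem_mul (Set.mul_mem_mul haJ hjJ) hbJ
    rw [hJ3] at h3
    exact (AddSubgroup.mem_bot).mp h3
  have hr : r = (n : R) + j := by rw [hj]; abel
  have hcomm : a * (n : R) = (n : R) * a := (Nat.cast_commute n a).symm
  calc a * r * b = a * (n : R) * b + a * j * b := by rw [hr, mul_add, add_mul]
  _ = (n : R) * (a * b) + 0 := by rw [hcomm, mul_assoc, hjzero]
  _ = 0 := by rw [hab, mul_zero, add_zero]
end

section
/- Let R be a finite local reflexive ring with Jacobson radical J = J(R) and residue field F = R/J a prime field (isomorphic to ZMod p for some prime p). Suppose the dimension of J/J² as an F-vector space is 2 and J⁴ = 0. Then R is semicommutative. -/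
open Pointwise

/-- For a finite local ring with residue field of prime order `p`, the dimension of
`Jⁱ/J^(i+1)` over the residue field is `d` iff the index of `J^(i+1)` in `Jⁱ` is `p ^ d`. -/
def jacobsonFactorDim (R : Type*) [Ring R] (p i d : ℕ) : Prop :=
  (jacobsonPow R (i + 1)).relIndex (jacobsonPow R i) = p ^ d

/-! Zero divisors of `R` lie in `J`, and `ℕ` maps onto `R/J` centrally, so for `ab = 0` it
suffices to show `aJb = 0`. Since `J⁴ = 0`, `ajb` only depends on `j` modulo `J²`, and vanishes
if `a ∈ J²`. If `a, b` are independent modulo `J²`, they span the 2-dimensional `J/J²`, and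
`aab = abb = 0`. Otherwise `b ≡ ka (mod J²)`; then `aR(kay) = 0`, and reflexivity gives
`ay(ka) = 0`, i.e. `ayb = 0`. -/

theorem Nat.eq_one_of_mul_mul_eq_prime_sq {p x y z : ℕ} (hp : p.Prime) (hx : x ≠ 1) (hy : y ≠ 1)
    (h : x * y * z = p ^ 2) : z = 1 := by
  obtain ⟨i, -, rfl⟩ := (Nat.dvd_prime_pow hp).1 (h ▸ (dvd_mul_right x y).mul_right z)
  obtain ⟨j, -, rfl⟩ := (Nat.dvd_prime_pow hp).1 (h ▸ (dvd_mul_left y _).mul_right z)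
  obtain ⟨l, -, rfl⟩ := (Nat.dvd_prime_pow hp).1 (h ▸ dvd_mul_left z _)
  rw [← pow_add, ← pow_add] at h
  have hijl : i + j + l = 2 := Nat.pow_right_injective hp.two_le h
  have hi : i ≠ 0 := by rintro rfl; exact hx (pow_zero p)
  have hj : j ≠ 0 := by rintro rfl; exact hy (pow_zero p)
  rw [show l = 0 by omega, pow_zero]

theorem AddSubgroup.eq_of_relIndex_eq_prime_sq {G : Type*} [AddCommGroup G] {p : ℕ}
    (hp : p.Prime) {N M L : AddSubgroup G} (hNM : N ≤ M) (hML : M ≤ L) (hidx : N.relIndex L = p ^ 2)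
    {a b : G} (ha : a ∈ M) (haN : a ∉ N) (hb : b ∈ M) (hbN : b ∉ zmultiples a ⊔ N) : M = L := by
  have hNK : N ≤ zmultiples a ⊔ N := le_sup_right
  have hKM : zmultiples a ⊔ N ≤ M := sup_le (zmultiples_le.2 ha) hNM
  have hNK_ne : N.relIndex (zmultiples a ⊔ N) ≠ 1 := fun h =>
    haN (relIndex_eq_one.1 h (mem_sup_left (mem_zmultiples a)))
  have hKM_ne : (zmultiples a ⊔ N).relIndex M ≠ 1 := fun h => hbN (relIndex_eq_one.1 h hb)
  have hprod : N.relIndex (zmultiples a ⊔ N) * (zmultiples a ⊔ N).relIndex M * M.relIndex L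
      = p ^ 2 := by
    rw [relIndex_mul_relIndex _ _ _ hNK hKM, relIndex_mul_relIndex _ _ _ (hNK.trans hKM) hML, hidx]
  exact le_antisymm hML
    (relIndex_eq_one.1 (Nat.eq_one_of_mul_mul_eq_prime_sq hp hNK_ne hKM_ne hprod))

section JacobsonPow

variable {R : Type*} [Ring R]

theorem mem_jacobsonPow_one {x : R} :
    x ∈ jacobsonPow R 1 ↔ x ∈ Ideal.jacobson (⊥ : Ideal R) := by
  rw [jacobsonPow, pow_one, ← Submodule.coe_toAddSubgroup, AddSubgroup.closure_eq]
  rfl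

theorem mul_mem_jacobsonPow {i j : ℕ} {x y : R} (hx : x ∈ jacobsonPow R i)
    (hy : y ∈ jacobsonPow R j) : x * y ∈ jacobsonPow R (i + j) := by
  rw [jacobsonPow, pow_add]
  induction hx using AddSubgroup.closure_induction with
  | mem s hs =>
    induction hy using AddSubgroup.closure_induction with
    | mem t ht => exact AddSubgroup.subset_closure (Set.mul_mem_mul hs ht)
    | zero => simp
    | add u v _ _ hu hv => rw [mul_add]; exact add_mem hu hv
    | neg u _ hu => rw [mul_neg]; exact neg_mem hu
  | zero => simp
  | add u v _ _ hu hv => rw [add_mul]; exact add_mem hu hv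
  | neg u _ hu => rw [neg_mul]; exact neg_mem hu

theorem mul_eq_zero_of_jacobsonPow_eq_bot {n i j : ℕ} (hn : jacobsonPow R n = ⊥) {x y : R}
    (hx : x ∈ jacobsonPow R i) (hy : y ∈ jacobsonPow R j) (hij : i + j = n) : x * y = 0 := by
  subst hij
  simpa [hn] using mul_mem_jacobsonPow hx hy

theorem jacobsonPow_succ_le_one (n : ℕ) : jacobsonPow R (n + 1) ≤ jacobsonPow R 1 := by
  rw [jacobsonPow, AddSubgroup.closure_le, pow_succ]
  rintro _ ⟨u, -, v, hv, rfl⟩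
  exact mem_jacobsonPow_one.2 (Ideal.mul_mem_left _ u hv)

theorem isNilpotent_of_jacobsonPow_eq_bot {n : ℕ} (hn : jacobsonPow R n = ⊥) {x : R}
    (hx : x ∈ Ideal.jacobson (⊥ : Ideal R)) : IsNilpotent x :=
  ⟨n, by
    have : x ^ n ∈ jacobsonPow R n := AddSubgroup.subset_closure (Set.pow_mem_pow hx)
    simpa [hn] using this⟩

theorem isUnit_of_map_eq_one {S : Type*} [Ring S] (f : R →+* S) {n : ℕ}
    (hn : jacobsonPow R n = ⊥) (hker : RingHom.ker f ≤ Ideal.jacobson ⊥) {x : R} (hx : f x = 1) :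
    IsUnit x := by
  have hx1 : x - 1 ∈ Ideal.jacobson (⊥ : Ideal R) := hker (by simp [RingHom.mem_ker, hx])
  simpa using (isNilpotent_of_jacobsonPow_eq_bot hn hx1).isUnit_add_one

end JacobsonPow

section ResidueMap

variable {R : Type*} [Ring R] {p : ℕ} (f : R →+* ZMod p)

theorem mem_jacobsonPow_one_iff_map_eq_zero (hker : RingHom.ker f = Ideal.jacobson ⊥)
    {x : R} : x ∈ jacobsonPow R 1 ↔ f x = 0 := by
  rw [mem_jacobsonPow_one, ← hker, RingHom.mem_ker]

theorem mul_mul_eq_zero_of_forall_mem_jacobsonPow_one [NeZero p]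
    (hker : RingHom.ker f = Ideal.jacobson ⊥) {a b : R} (hab : a * b = 0)
    (h : ∀ j ∈ jacobsonPow R 1, a * j * b = 0) (r : R) : a * r * b = 0 := by
  have hj : r - ((f r).val : R) ∈ jacobsonPow R 1 :=
    (mem_jacobsonPow_one_iff_map_eq_zero f hker).2 (by simp)
  rw [← sub_add_cancel r ((f r).val : R), mul_add, add_mul, h _ hj, ← Nat.cast_comm, mul_assoc,
    hab, mul_zero, zero_add]

variable [Fact p.Prime] {n : ℕ} {a b : R}

theorem map_eq_zero_of_mul_eq_zero_left (hn : jacobsonPow R n = ⊥)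
    (hker : RingHom.ker f ≤ Ideal.jacobson ⊥) (hab : a * b = 0) (hb : b ≠ 0) : f a = 0 := by
  by_contra ha
  have hu : IsUnit (((f a)⁻¹.val : R) * a) :=
    isUnit_of_map_eq_one f hn hker (by simp [inv_mul_cancel₀ ha])
  exact hb (hu.mul_right_eq_zero.1 (by rw [mul_assoc, hab, mul_zero]))

theorem map_eq_zero_of_mul_eq_zero_right (hn : jacobsonPow R n = ⊥)
    (hker : RingHom.ker f ≤ Ideal.jacobson ⊥) (hab : a * b = 0) (ha : a ≠ 0) : f b = 0 := by
  by_contra hb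
  have hu : IsUnit (b * ((f b)⁻¹.val : R)) :=
    isUnit_of_map_eq_one f hn hker (by simp [mul_inv_cancel₀ hb])
  exact ha (hu.mul_left_eq_zero.1 (by rw [← mul_assoc, hab, zero_mul]))

end ResidueMap

section JacobsonPowFour

variable {R : Type*} [Ring R] {a b y : R}

theorem mul_mul_eq_zero_of_mem_zmultiples_sup {p : ℕ} [NeZero p] (f : R →+* ZMod p)
    (href : IsReflexiveRing R) (hker : RingHom.ker f = Ideal.jacobson ⊥)
    (hJ4 : jacobsonPow R 4 = ⊥) (hab : a * b = 0) (ha : a ∈ jacobsonPow R 1)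
    (hb : b ∈ AddSubgroup.zmultiples a ⊔ jacobsonPow R 2) (hy : y ∈ jacobsonPow R 1) :
    a * y * b = 0 := by
  obtain ⟨_, ⟨k, rfl⟩, w, hw, rfl⟩ := AddSubgroup.mem_sup.1 hb
  have haka : a * (k • a) = -(a * w) := eq_neg_of_add_eq_zero_left (by rw [← mul_add, hab])
  have hkay : ∀ r, a * r * (k • (a * y)) = 0 := by
    refine mul_mul_eq_zero_of_forall_mem_jacobsonPow_one f hker ?_ fun j hj => ?_
    · rw [← smul_mul_assoc, ← mul_assoc, haka, neg_mul,
        mul_eq_zero_of_jacobsonPow_eq_bot hJ4 (mul_mem_jacobsonPow ha hw) hy rfl, neg_zero]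
    · rw [mul_smul_comm, ← mul_assoc,
        mul_eq_zero_of_jacobsonPow_eq_bot hJ4 (mul_mem_jacobsonPow (mul_mem_jacobsonPow ha hj) ha)
          hy rfl, smul_zero]
  have hayka : a * y * (k • a) = 0 := by
    have := href a _ hkay 1
    rwa [mul_one, smul_mul_assoc, ← mul_smul_comm] at this
  rw [mul_add, hayka, zero_add,
    mul_eq_zero_of_jacobsonPow_eq_bot hJ4 (mul_mem_jacobsonPow ha hy) hw rfl]

theorem mul_mul_eq_zero_of_notMem_zmultiples_sup {p : ℕ} (hp : p.Prime)
    (h1 : jacobsonFactorDim R p 1 2) (hJ4 : jacobsonPow R 4 = ⊥) (hab : a * b = 0)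
    (ha : a ∈ jacobsonPow R 1) (ha2 : a ∉ jacobsonPow R 2) (hb : b ∈ jacobsonPow R 1)
    (hb2 : b ∉ AddSubgroup.zmultiples a ⊔ jacobsonPow R 2) (hy : y ∈ jacobsonPow R 1) :
    a * y * b = 0 := by
  let annihilator : AddSubgroup R :=
    ((AddMonoidHom.mulRight b).comp (AddMonoidHom.mulLeft a)).ker ⊓ jacobsonPow R 1
  have hJ2 : jacobsonPow R 2 ≤ annihilator := fun x hx =>
    ⟨mul_eq_zero_of_jacobsonPow_eq_bot hJ4 (mul_mem_jacobsonPow ha hx) hb rfl,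
      jacobsonPow_succ_le_one 1 hx⟩
  have haM : a ∈ annihilator := ⟨show a * a * b = 0 by rw [mul_assoc, hab, mul_zero], ha⟩
  have hbM : b ∈ annihilator := ⟨show a * b * b = 0 by rw [hab, zero_mul], hb⟩
  have := AddSubgroup.eq_of_relIndex_eq_prime_sq hp hJ2 inf_le_right h1 haM ha2 hbM hb2
  exact (this ▸ hy : y ∈ annihilator).1

end JacobsonPowFour

theorem finite_local_reflexive_dim_two_j4_zero_semicommutative_general
    (R : Type*) [Ring R] (href : IsReflexiveRing R)
    (p : ℕ) (hp : p.Prime) (f : R →+* ZMod p)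
    (hker : RingHom.ker f = Ideal.jacobson (⊥ : Ideal R))
    (h1 : jacobsonFactorDim R p 1 2) (hJ4 : jacobsonPow R 4 = ⊥) :
    IsSemicommutativeRing R := by
  have := Fact.mk hp
  intro a b hab
  rcases eq_or_ne a 0 with rfl | ha0
  · simp
  rcases eq_or_ne b 0 with rfl | hb0
  · simp
  have ha : a ∈ jacobsonPow R 1 := (mem_jacobsonPow_one_iff_map_eq_zero f hker).2
    (map_eq_zero_of_mul_eq_zero_left f hJ4 hker.le hab hb0)
  have hb : b ∈ jacobsonPow R 1 := (mem_jacobsonPow_one_iff_map_eq_zero f hker).2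
    (map_eq_zero_of_mul_eq_zero_right f hJ4 hker.le hab ha0)
  refine mul_mul_eq_zero_of_forall_mem_jacobsonPow_one f hker hab fun y hy => ?_
  by_cases ha2 : a ∈ jacobsonPow R 2
  · exact mul_eq_zero_of_jacobsonPow_eq_bot hJ4 (mul_mem_jacobsonPow ha2 hy) hb rfl
  by_cases hb2 : b ∈ AddSubgroup.zmultiples a ⊔ jacobsonPow R 2
  · exact mul_mul_eq_zero_of_mem_zmultiples_sup f href hker hJ4 hab ha hb2 hy
  · exact mul_mul_eq_zero_of_notMem_zmultiples_sup hp h1 hJ4 hab ha ha2 hb hb2 hy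

theorem finite_local_reflexive_dim_two_j4_zero_semicommutative
    (R : Type*) [Ring R] [Finite R] [IsLocalRing R] (href : IsReflexiveRing R)
    (p : ℕ) (hp : p.Prime) (f : R →+* ZMod p) (hf : Function.Surjective f)
    (hker : RingHom.ker f = Ideal.jacobson (⊥ : Ideal R))
    (h1 : jacobsonFactorDim R p 1 2) (hJ4 : jacobsonPow R 4 = ⊥) :
    IsSemicommutativeRing R :=
  finite_local_reflexive_dim_two_j4_zero_semicommutative_general R href p hp f hker h1 hJ4
end

section
/- A ring R (associative with identity, not necessarily commutative) is reversible if and only if it is both reflexive and semicommutative. -/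
/-- A ring is reversible if `a*b = 0` implies `b*a = 0`. -/
def IsReversibleRing (R : Type*) [Ring R] : Prop :=
  ∀ a b : R, a * b = 0 → b * a = 0

theorem reversible_iff_reflexive_and_semicommutative (R : Type*) [Ring R] :
    IsReversibleRing R ↔ IsReflexiveRing R ∧ IsSemicommutativeRing R := by
  constructor
  · intro h
    have hsemi : IsSemicommutativeRing R := by
      intro a b hab r
      have hba : b * a = 0 := h a b hab
      have : (r * b) * a = 0 := by rw [mul_assoc, hba, mul_zero]
      have := h (r * b) a this
      rwa [← mul_assoc] at this
    refine ⟨?_, hsemi⟩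
    intro a b hab r
    have hb : a * b = 0 := by simpa using hab 1
    exact hsemi b a (h a b hb) r
  · rintro ⟨hrefl, hsemi⟩ a b hab
    have := hrefl a b (hsemi a b hab) 1
    simpa using this
end
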